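/- arXiv:2209.10594 — 3 statements merged into one kernel-verified Lean document; each statement's English description precedes it below -/
import Mathlib

section
/- Under the CFL condition and with velocities $\tilde{u}^n$ supported away from the boundary of $\Omega_h$, the $\ell^p$ norm of the explicit scheme solution satisfies $\|g^{n}\|_{p, h\mathbb{Z}^3}^p \le \|g^0\|_{p, h\mathbb{Z}^3}^p + \sum_{m=0}^{n-1}\sum_{x\in\Omega_h} (D\cdot \tilde{u}^m(x))\,|g^m(x)|^p\, h^3\tau$ for every $p\in[1,\infty)$ and every $n\ge 1$, where $D\cdot\tilde{u} = \sum_{j=1}^3 D_j \tilde{u}_j$ is the central-difference divergence. -/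
/-!
Under the CFL condition one step of the scheme writes `gⁿ⁺¹(x)` as a convex combination of
the values of `gⁿ` on the seven-point stencil of `x`, so Jensen's inequality for `t ↦ |t|ᵖ`
bounds `|gⁿ⁺¹(x)|ᵖ` by the same combination of the `|gⁿ|ᵖ`. Summing over the lattice and
shifting the summation index in each term (summation by parts), the weights collected at a
point `y` add up to `1 + τ (D·ũⁿ)(y)`, and the correction vanishes outside `Ω_h`.
Iterating over the time steps gives the estimate.
-/

open Finset Function

section ShiftedConvexCombination

variable {G ι : Type*} [AddCommGroup G] [Fintype ι]

lemma support_abs_rpow_subset {α : Type*} (f : α → ℝ) {p : ℝ} (hp : p ≠ 0) :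
    support (fun x => |f x| ^ p) ⊆ support f :=
  support_subset_iff'.2 fun x hx => by simp [notMem_support.1 hx, Real.zero_rpow hp]

lemma summable_abs_rpow_of_support_finite {α : Type*} {f : α → ℝ} (hf : (support f).Finite)
    {p : ℝ} (hp : p ≠ 0) : Summable fun x => |f x| ^ p :=
  summable_of_hasFiniteSupport <| hf.subset (support_abs_rpow_subset f hp)

lemma summable_mul_abs_rpow_of_support_finite {α : Type*} (c : α → ℝ) {f : α → ℝ}
    (hf : (support f).Finite) {p : ℝ} (hp : p ≠ 0) : Summable fun x => c x * |f x| ^ p :=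
  summable_of_hasFiniteSupport <|
    hf.subset <| (support_mul_subset_right _ _).trans (support_abs_rpow_subset f hp)

lemma support_sum_mul_shift_finite {w : ι → G → ℝ} {s : ι → G} {f : G → ℝ}
    (hf : (support f).Finite) : (support fun x => ∑ i, w i x * f (x + s i)).Finite :=
  HasFiniteSupport.sum (fun i => (hf.preimage (add_left_injective (s i)).injOn).subset
    (support_mul_subset_right (w i) _)) univ

lemma abs_sum_mul_rpow_le {w z : ι → ℝ} (hw : ∀ i, 0 ≤ w i) (hw1 : ∑ i, w i = 1)
    {p : ℝ} (hp : 1 ≤ p) : |∑ i, w i * z i| ^ p ≤ ∑ i, w i * |z i| ^ p := by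
  have habs : |∑ i, w i * z i| ≤ ∑ i, w i * |z i| :=
    (abs_sum_le_sum_abs _ _).trans_eq <|
      sum_congr rfl fun i _ => by rw [abs_mul, abs_of_nonneg (hw i)]
  calc |∑ i, w i * z i| ^ p ≤ (∑ i, w i * |z i|) ^ p :=
        Real.rpow_le_rpow (abs_nonneg _) habs (zero_le_one.trans hp)
    _ ≤ ∑ i, w i * |z i| ^ p :=
        Real.rpow_arith_mean_le_arith_mean_rpow univ w (|z ·|) (fun i _ => hw i) hw1
          (fun i _ => abs_nonneg _) hp

theorem tsum_abs_rpow_sum_mul_shift_le {w : ι → G → ℝ} {s : ι → G} {f : G → ℝ}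
    (hf : (support f).Finite) (hw : ∀ i x, 0 ≤ w i x) (hw1 : ∀ x, ∑ i, w i x = 1)
    {p : ℝ} (hp : 1 ≤ p) :
    ∑' x, |∑ i, w i x * f (x + s i)| ^ p ≤ ∑' y, (∑ i, w i (y - s i)) * |f y| ^ p := by
  have hp0 : p ≠ 0 := (zero_lt_one.trans_le hp).ne'
  have hsummable : ∀ i ∈ univ, Summable fun x => w i x * |f (x + s i)| ^ p := fun i _ =>
    summable_mul_abs_rpow_of_support_finite _ (hf.preimage (add_left_injective (s i)).injOn) hp0
  calc ∑' x, |∑ i, w i x * f (x + s i)| ^ p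
      ≤ ∑' x, ∑ i, w i x * |f (x + s i)| ^ p :=
        Summable.tsum_le_tsum (fun x => abs_sum_mul_rpow_le (hw · x) (hw1 x) hp)
          (summable_abs_rpow_of_support_finite (support_sum_mul_shift_finite hf) hp0)
          (summable_sum hsummable)
    _ = ∑ i, ∑' x, w i x * |f (x + s i)| ^ p := Summable.tsum_finsetSum hsummable
    _ = ∑ i, ∑' y, w i (y - s i) * |f y| ^ p := sum_congr rfl fun i _ => by
        simpa using ((Equiv.subRight (s i)).tsum_eq fun x => w i x * |f (x + s i)| ^ p).symm
    _ = ∑' y, (∑ i, w i (y - s i)) * |f y| ^ p := by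
        simp_rw [sum_mul]
        exact (Summable.tsum_finsetSum fun i _ =>
          summable_mul_abs_rpow_of_support_finite _ hf hp0).symm

end ShiftedConvexCombination

lemma le_add_sum_range_of_le_add {α : Type*} [AddCommMonoid α] [PartialOrder α]
    [IsOrderedAddMonoid α] {s d : ℕ → α} (h : ∀ m, s (m + 1) ≤ s m + d m) (n : ℕ) :
    s n ≤ s 0 + ∑ m ∈ range n, d m := by
  induction n with
  | zero => simp
  | succ n ih =>
    rw [sum_range_succ, ← add_assoc]
    exact (h n).trans (by gcongr)

section LaxFriedrichs

variable {G ι : Type*} {c : ℝ} {a : ι → G → ℝ}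

/-- The stencil is indexed by `Option (ι × Bool)`: `none` is the centre `x`, `some (j, true)`
and `some (j, false)` are the neighbours `x - e j` and `x + e j` (see `laxFriedrichsShift`). -/
def laxFriedrichsWeight (c : ℝ) (a : ι → G → ℝ) : Option (ι × Bool) → G → ℝ
  | none, _ => c
  | some (j, true), x => c + a j x
  | some (j, false), x => c - a j x

lemma laxFriedrichsWeight_nonneg (hc : 0 ≤ c) (hCFL : ∀ j x, 0 ≤ c + a j x ∧ 0 ≤ c - a j x) :
    ∀ i x, 0 ≤ laxFriedrichsWeight c a i x
  | none, _ => hc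
  | some (j, true), x => (hCFL j x).1
  | some (j, false), x => (hCFL j x).2

variable [Fintype ι]

lemma sum_laxFriedrichsWeight (x : G) :
    ∑ i, laxFriedrichsWeight c a i x = c * (2 * Fintype.card ι + 1) := by
  simp only [laxFriedrichsWeight, Fintype.sum_option, Fintype.sum_prod_type, Fintype.sum_bool]
  simp only [add_add_sub_cancel, sum_add_distrib, sum_const, card_univ, nsmul_eq_mul]
  ring

variable [AddCommGroup G] {e : ι → G}

/-- For `c = 1/7`, `e j` the unit vectors of `ℤ³` and `a j = (τ / 2h) ũⁿⱼ` this is the paper's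
scheme with the central differences `D_j` written out. -/
def laxFriedrichsStep (c : ℝ) (e : ι → G) (a : ι → G → ℝ) (f : G → ℝ) (x : G) : ℝ :=
  c * f x + ∑ j, ((c + a j x) * f (x - e j) + (c - a j x) * f (x + e j))

def laxFriedrichsShift (e : ι → G) : Option (ι × Bool) → G
  | none => 0
  | some (j, true) => -e j
  | some (j, false) => e j

lemma laxFriedrichsStep_eq_sum (f : G → ℝ) (x : G) :
    laxFriedrichsStep c e a f x =
      ∑ i, laxFriedrichsWeight c a i x * f (x + laxFriedrichsShift e i) := by
  simp [laxFriedrichsStep, laxFriedrichsWeight, laxFriedrichsShift, Fintype.sum_option,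
    Fintype.sum_prod_type, sub_eq_add_neg]

lemma sum_laxFriedrichsWeight_sub_shift (y : G) :
    ∑ i, laxFriedrichsWeight c a i (y - laxFriedrichsShift e i) =
      c * (2 * Fintype.card ι + 1) + ∑ j, (a j (y + e j) - a j (y - e j)) := by
  simp only [laxFriedrichsWeight, laxFriedrichsShift, Fintype.sum_option, Fintype.sum_prod_type,
    Fintype.sum_bool, sub_neg_eq_add]
  simp only [sum_add_distrib, sum_sub_distrib, sum_const, card_univ, nsmul_eq_mul]
  ring

lemma laxFriedrichsStep_support_finite {f : G → ℝ} (hf : (support f).Finite) :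
    (support (laxFriedrichsStep c e a f)).Finite := by
  rw [show laxFriedrichsStep c e a f = _ from funext (laxFriedrichsStep_eq_sum f)]
  exact support_sum_mul_shift_finite hf

theorem tsum_abs_rpow_laxFriedrichsStep_le {f : G → ℝ} (hf : (support f).Finite)
    (hc : c * (2 * Fintype.card ι + 1) = 1) (hCFL : ∀ j x, 0 ≤ c + a j x ∧ 0 ≤ c - a j x)
    {p : ℝ} (hp : 1 ≤ p) :
    ∑' x, |laxFriedrichsStep c e a f x| ^ p ≤
      ∑' y, (1 + ∑ j, (a j (y + e j) - a j (y - e j))) * |f y| ^ p := by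
  have hc0 : 0 < c := (pos_iff_pos_of_mul_pos (hc ▸ one_pos)).2 (by positivity)
  have := tsum_abs_rpow_sum_mul_shift_le (s := laxFriedrichsShift e) hf
    (laxFriedrichsWeight_nonneg hc0.le hCFL) (fun x => (sum_laxFriedrichsWeight x).trans hc) hp
  simpa only [← laxFriedrichsStep_eq_sum, sum_laxFriedrichsWeight_sub_shift, hc] using this

theorem tsum_abs_rpow_laxFriedrichsStep_le_add {f : G → ℝ} (hf : (support f).Finite)
    (hc : c * (2 * Fintype.card ι + 1) = 1) (hCFL : ∀ j x, 0 ≤ c + a j x ∧ 0 ≤ c - a j x)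
    {p : ℝ} (hp : 1 ≤ p) {Ω : Finset G}
    (hΩ : ∀ y ∉ Ω, ∑ j, (a j (y + e j) - a j (y - e j)) = 0) :
    ∑' x, |laxFriedrichsStep c e a f x| ^ p ≤
      ∑' y, |f y| ^ p + ∑ y ∈ Ω, (∑ j, (a j (y + e j) - a j (y - e j))) * |f y| ^ p := by
  have hp0 : p ≠ 0 := (zero_lt_one.trans_le hp).ne'
  refine (tsum_abs_rpow_laxFriedrichsStep_le hf hc hCFL hp).trans_eq ?_
  simp_rw [add_mul, one_mul]
  rw [(summable_abs_rpow_of_support_finite hf hp0).tsum_add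
    (summable_mul_abs_rpow_of_support_finite _ hf hp0)]
  exact congrArg _ (tsum_eq_sum fun y hy => by simp [hΩ y hy])

end LaxFriedrichs

theorem lax_friedrichs_lp_estimate_general
    (h τ : ℝ) (hh : 0 < h)
    (Ωh : Finset (Fin 3 → ℤ))
    (u : ℕ → Fin 3 → (Fin 3 → ℤ) → ℝ)
    (g : ℕ → (Fin 3 → ℤ) → ℝ)
    (hg0fin : (Function.support (g 0)).Finite)
    (husupp : ∀ n (j : Fin 3) (x : Fin 3 → ℤ), u n j x ≠ 0 →
      x ∈ Ωh ∧ ∀ i : Fin 3, (x + Pi.single i 1) ∈ Ωh ∧ (x - Pi.single i 1) ∈ Ωh)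
    (hCFL : ∀ n (j : Fin 3) (x : Fin 3 → ℤ),
      0 ≤ 1 / 7 + τ / (2 * h) * u n j x ∧ 0 ≤ 1 / 7 - τ / (2 * h) * u n j x)
    (hscheme : ∀ n (x : Fin 3 → ℤ), g (n + 1) x =
      (1 / 7) * g n x + ∑ j : Fin 3,
        ((1 / 7 + τ / (2 * h) * u n j x) * g n (x - Pi.single j 1)
          + (1 / 7 - τ / (2 * h) * u n j x) * g n (x + Pi.single j 1)))
    (p : ℝ) (hp : 1 ≤ p) :
    ∀ n : ℕ, 1 ≤ n →
      (∑' x : Fin 3 → ℤ, |g n x| ^ p * h ^ 3) ≤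
        (∑' x : Fin 3 → ℤ, |g 0 x| ^ p * h ^ 3)
        + ∑ m ∈ Finset.range n, ∑ x ∈ Ωh,
            (∑ j : Fin 3,
              (u m j (x + Pi.single j 1) - u m j (x - Pi.single j 1)) / (2 * h))
            * |g m x| ^ p * h ^ 3 * τ := by
  intro n _
  set e : Fin 3 → Fin 3 → ℤ := fun j => Pi.single j 1
  set a : ℕ → Fin 3 → (Fin 3 → ℤ) → ℝ := fun m j x => τ / (2 * h) * u m j x
  have hstep m : g (m + 1) = laxFriedrichsStep (1 / 7) e (a m) (g m) := funext (hscheme m)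
  have hfin m : (support (g m)).Finite := by
    induction m with
    | zero => exact hg0fin
    | succ m ih => exact hstep m ▸ laxFriedrichsStep_support_finite ih
  have hdiv m : ∀ y ∉ Ωh, ∑ j, (a m j (y + e j) - a m j (y - e j)) = 0 := fun y hy =>
    sum_eq_zero fun j _ => by
      have hnext : u m j (y + e j) = 0 := by_contra fun hne => hy <| by
        simpa [e] using ((husupp m j _ hne).2 j).2
      have hprev : u m j (y - e j) = 0 := by_contra fun hne => hy <| by
        simpa [e] using ((husupp m j _ hne).2 j).1
      simp [a, hnext, hprev]
  have hlp := le_add_sum_range_of_le_add (s := fun m => ∑' x, |g m x| ^ p) (fun m => hstep m ▸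
    tsum_abs_rpow_laxFriedrichsStep_le_add (hfin m) (by norm_num) (hCFL m) hp (hdiv m)) n
  calc ∑' x, |g n x| ^ p * h ^ 3 = (∑' x, |g n x| ^ p) * h ^ 3 := tsum_mul_right
    _ ≤ _ * h ^ 3 := mul_le_mul_of_nonneg_right hlp (by positivity)
    _ = _ := by
      rw [add_mul, tsum_mul_right, sum_mul]
      refine congrArg _ (sum_congr rfl fun m _ => ?_)
      rw [sum_mul]
      refine sum_congr rfl fun x _ => ?_
      simp only [← mul_sub, ← mul_sum, ← sum_div]
      ring

/-- `ℓ^p` estimate for the explicit Lax–Friedrichs scheme: under the CFL condition,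
with velocity `ũ` supported (together with its neighbors) inside `Ω_h`,
`‖gⁿ‖_{p}^p ≤ ‖g⁰‖_p^p + ∑_{m<n} ∑_{x∈Ω_h} (D·ũᵐ)(x) |gᵐ(x)|^p h³ τ`. -/
theorem lax_friedrichs_lp_estimate
    (h τ : ℝ) (hh : 0 < h) (hτ : 0 < τ)
    (Ωh : Finset (Fin 3 → ℤ))
    (u : ℕ → Fin 3 → (Fin 3 → ℤ) → ℝ)
    (g : ℕ → (Fin 3 → ℤ) → ℝ)
    (hg0fin : (Function.support (g 0)).Finite)
    (husupp : ∀ n (j : Fin 3) (x : Fin 3 → ℤ), u n j x ≠ 0 →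
      x ∈ Ωh ∧ ∀ i : Fin 3, (x + Pi.single i 1) ∈ Ωh ∧ (x - Pi.single i 1) ∈ Ωh)
    (hCFL : ∀ n (j : Fin 3) (x : Fin 3 → ℤ),
      0 ≤ 1 / 7 + τ / (2 * h) * u n j x ∧ 0 ≤ 1 / 7 - τ / (2 * h) * u n j x)
    (hscheme : ∀ n (x : Fin 3 → ℤ), g (n + 1) x =
      (1 / 7) * g n x + ∑ j : Fin 3,
        ((1 / 7 + τ / (2 * h) * u n j x) * g n (x - Pi.single j 1)
          + (1 / 7 - τ / (2 * h) * u n j x) * g n (x + Pi.single j 1)))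
    (p : ℝ) (hp : 1 ≤ p) :
    ∀ n : ℕ, 1 ≤ n →
      (∑' x : Fin 3 → ℤ, |g n x| ^ p * h ^ 3) ≤
        (∑' x : Fin 3 → ℤ, |g 0 x| ^ p * h ^ 3)
        + ∑ m ∈ Finset.range n, ∑ x ∈ Ωh,
            (∑ j : Fin 3,
              (u m j (x + Pi.single j 1) - u m j (x - Pi.single j 1)) / (2 * h))
            * |g m x| ^ p * h ^ 3 * τ :=
  lax_friedrichs_lp_estimate_general h τ hh Ωh u g hg0fin husupp hCFL hscheme p hp
end

section
/- Let $w^n : \Omega_h \to \mathbb{R}^3$ satisfy $D^-\cdot w^n = 0$ on $\Omega_h\setminus\partial\Omega_h$ and $w^n = 0$ on $\partial\Omega_h$ (extended by zero outside $\Omega_h$). Then for any grid function $g : \Omega_h\to\mathbb{R}$ with $g|_{\partial\Omega_h} = 0$, the skew-symmetric discrete advection term annihilates energy: $\sum_{j=1}^3\sum_{x\in\Omega_h\setminus\partial\Omega_h} \big(w^n_j(x-he^j)D^+_j g(x-he^j) + w^n_j(x)D^+_j g(x)\big)\,g(x)\, h^3 = 0$. -/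
/-! With `F_j(x) = w_j(x) g(x) g(x + e_j)`, each summand
`(w_j(x - e_j) D⁺_j g(x - e_j) + w_j(x) D⁺_j g(x)) g(x)` equals `D⁻_j F_j(x) - D⁻_j w_j(x) g(x)²`.
Summed over `j`, the second term is the discrete divergence of `w` times `g²`, which vanishes;
summed over `x`, the first telescopes to zero, because `g` vanishes off the summation set and
hence so do `F_j` and its shift. -/

open Finset

/-- Discrete boundary of a set `A ⊂ hℤ³` (identified with `ℤ³`):
`∂A = {x ∈ A | {x ± e^i} ⊄ A}`. -/
noncomputable def discreteBoundary (A : Finset (Fin 3 → ℤ)) : Finset (Fin 3 → ℤ)  :=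
  open scoped Classical in
  A.filter fun x => ¬ ∀ i : Fin 3, (x + Pi.single i 1) ∈ A ∧ (x - Pi.single i 1) ∈ A

theorem sum_comp_sub_eq_sum_of_support {G M : Type*} [AddGroup G] [AddCommMonoid M]
    (S : Finset G) (a : G) (F : G → M) (hF : ∀ x, F x ≠ 0 → x ∈ S ∧ x + a ∈ S) :
    ∑ x ∈ S, F (x - a) = ∑ x ∈ S, F x := by
  have hsupp : Function.support F ⊆ S := fun x hx => (hF x hx).1
  have hsupp_shift : Function.support (fun x => F (x - a)) ⊆ S := fun x hx => by
    simpa using (hF _ hx).2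
  rw [← finsum_eq_sum_of_support_subset _ hsupp, ← finsum_eq_sum_of_support_subset _ hsupp_shift]
  exact finsum_comp_equiv (Equiv.subRight a)

theorem sum_skew_advection_mul_self_eq_zero {G ι K : Type*} [AddGroup G] [Fintype ι] [Field K]
    (S : Finset G) (e : ι → G) (h : K) (w : G → ι → K) (g : G → K)
    (hdiv : ∀ x ∈ S, ∑ j, (w x j - w (x - e j) j) / h = 0) (hg : ∀ x ∉ S, g x = 0) :
    ∑ j, ∑ x ∈ S, (w (x - e j) j * ((g x - g (x - e j)) / h)
      + w x j * ((g (x + e j) - g x) / h)) * g x = 0 := by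
  set F : ι → G → K := fun j x => w x j * g x * g (x + e j)
  have hshift (j : ι) : ∑ x ∈ S, F j (x - e j) = ∑ x ∈ S, F j x := by
    refine sum_comp_sub_eq_sum_of_support S (e j) (F j) fun x hx => ⟨?_, ?_⟩ <;>
      · by_contra hS
        simp [F, hg _ hS] at hx
  have hsplit (j : ι) (x : G) :
      (w (x - e j) j * ((g x - g (x - e j)) / h) + w x j * ((g (x + e j) - g x) / h)) * g x
        = (F j x - F j (x - e j)) / h - (w x j - w (x - e j) j) / h * g x ^ 2 := by
    simp only [F, sub_add_cancel]
    ring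
  have htelescope : ∑ j, ∑ x ∈ S, (F j x - F j (x - e j)) / h = 0 :=
    sum_eq_zero fun j _ => by rw [← sum_div, sum_sub_distrib, hshift, sub_self, zero_div]
  have hdiv_free : ∑ j, ∑ x ∈ S, (w x j - w (x - e j) j) / h * g x ^ 2 = 0 := by
    rw [sum_comm]
    exact sum_eq_zero fun x hx => by rw [← sum_mul, hdiv x hx, zero_mul]
  calc _ = ∑ j, ∑ x ∈ S, (F j x - F j (x - e j)) / h
          - ∑ j, ∑ x ∈ S, (w x j - w (x - e j) j) / h * g x ^ 2 := by
        simp only [hsplit, ← sum_sub_distrib]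
    _ = 0 := by rw [htelescope, hdiv_free, sub_zero]

theorem discrete_advection_energy_identity_general
    (h : ℝ) (Ωh : Finset (Fin 3 → ℤ))
    (w : (Fin 3 → ℤ) → Fin 3 → ℝ) (g : (Fin 3 → ℤ) → ℝ)
    (hwdiv : ∀ x ∈ Ωh \ discreteBoundary Ωh,
      ∑ j : Fin 3, (w x j - w (x - Pi.single j 1) j) / h = 0)
    (hg0 : ∀ x, x ∉ Ωh \ discreteBoundary Ωh → g x = 0) :
    ∑ j : Fin 3, ∑ x ∈ Ωh \ discreteBoundary Ωh,
        (w (x - Pi.single j 1) j * ((g x - g (x - Pi.single j 1)) / h)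
          + w x j * ((g (x + Pi.single j 1) - g x) / h)) * g x * h ^ 3 = 0 := by
  simp only [← sum_mul]
  rw [sum_skew_advection_mul_self_eq_zero _ (fun j => Pi.single j 1) h w g hwdiv hg0, zero_mul]

/-- Energy identity for the skew-symmetric (Ladyzhenskaya-type) discrete advection
term: if `wⁿ` is discrete divergence-free (`D⁻·wⁿ = 0` on `Ω_h∖∂Ω_h`) and vanishes on
`∂Ω_h` and outside `Ω_h`, then for any grid function `g` vanishing on `∂Ω_h` and
outside `Ω_h`,
`∑_j ∑_x (wⁿ_j(x−he^j) D⁺_j g(x−he^j) + wⁿ_j(x) D⁺_j g(x)) g(x) h³ = 0`. -/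
theorem discrete_advection_energy_identity
    (h : ℝ) (hh : 0 < h) (Ωh : Finset (Fin 3 → ℤ))
    (w : (Fin 3 → ℤ) → Fin 3 → ℝ) (g : (Fin 3 → ℤ) → ℝ)
    (hwdiv : ∀ x ∈ Ωh \ discreteBoundary Ωh,
      ∑ j : Fin 3, (w x j - w (x - Pi.single j 1) j) / h = 0)
    (hw0 : ∀ x, x ∉ Ωh \ discreteBoundary Ωh → ∀ j : Fin 3, w x j = 0)
    (hg0 : ∀ x, x ∉ Ωh \ discreteBoundary Ωh → g x = 0) :
    ∑ j : Fin 3, ∑ x ∈ Ωh \ discreteBoundary Ωh,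
        (w (x - Pi.single j 1) j * ((g x - g (x - Pi.single j 1)) / h)
          + w x j * ((g (x + Pi.single j 1) - g x) / h)) * g x * h ^ 3 = 0 :=
  discrete_advection_energy_identity_general h Ωh w g hwdiv hg0
end

section
/- The implicit scheme $\frac{g^{n+1}(x) - g^n(x)}{\tau} + \frac12\sum_{j=1}^3 (w^n_j(x-he^j)D^+_j g^{n+1}(x-he^j) + w^n_j(x)D^+_j g^{n+1}(x)) = 0$ on $\Omega_h\setminus\partial\Omega_h$ with $g^{n+1}|_{\partial\Omega_h} = 0$ is uniquely solvable for every $h,\tau > 0$ (no scaling condition), and the solution satisfies $\|g^{n}\|_{2,\Omega_h} \le \|g^0\|_{2,\Omega_h}$ for all $n = 0,1,\dots,T_\tau$. -/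
open Finset

/-- `g` solves the implicit scheme with initial datum `g0`, velocity `w` and
zero boundary condition:
`(g^{n+1} − gⁿ)/τ + (1/2)∑_j (wⁿ_j(x−he^j) D⁺_j g^{n+1}(x−he^j) + wⁿ_j(x) D⁺_j g^{n+1}(x)) = 0`
on `Ω_h∖∂Ω_h`, and `g^{n+1} = 0` on `∂Ω_h` and outside `Ω_h`. -/
def SolvesImplicitScheme (h τ : ℝ) (Ωh : Finset (Fin 3 → ℤ))
    (w : ℕ → (Fin 3 → ℤ) → Fin 3 → ℝ) (g0 : (Fin 3 → ℤ) → ℝ)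
    (g : ℕ → (Fin 3 → ℤ) → ℝ) : Prop :=
  g 0 = g0 ∧ ∀ n : ℕ,
    (∀ x ∈ Ωh \ discreteBoundary Ωh,
      (g (n + 1) x - g n x) / τ
        + (1 / 2) * ∑ j : Fin 3,
            (w n (x - Pi.single j 1) j
                * ((g (n + 1) x - g (n + 1) (x - Pi.single j 1)) / h)
              + w n x j * ((g (n + 1) (x + Pi.single j 1) - g (n + 1) x) / h)) = 0) ∧
    (∀ x, x ∉ Ωh \ discreteBoundary Ωh → g (n + 1) x = 0)

/-!
Testing one step of the scheme against `g^{n+1}` and summing by parts in each direction, the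
advection term becomes `-∑ₓ (D⁻·wⁿ)(x) g^{n+1}(x)²`, which vanishes because `wⁿ` is discretely
divergence-free on the interior, where `g^{n+1}` is supported. Hence
`‖g^{n+1}‖² = (g^{n+1}, gⁿ)`: this gives `‖g^{n+1}‖ ≤ ‖gⁿ‖`, and for `gⁿ = 0` it forces
`g^{n+1} = 0`, so each step is an injective, hence bijective, square linear system, whatever `τ/h`.
-/

open Function

section Advection

variable {G : Type*} [AddGroup G]

theorem finsum_mul_upwind (δ : G) (a u : G → ℝ) (hu : u.HasFiniteSupport) :
    ∑ᶠ x, u x * (a (x - δ) * (u x - u (x - δ)) + a x * (u (x + δ) - u x))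
      = ∑ᶠ x, (a (x - δ) - a x) * u x ^ 2 := by
  set P : G → ℝ := fun x => u x * (a x * u (x + δ))
  have hP : P.HasFiniteSupport := hu.fun_mul_left _
  have hPδ : (fun x => P (x - δ)).HasFiniteSupport := hP.fun_comp_of_injective sub_left_injective
  have hQ : (fun x => (a (x - δ) - a x) * u x ^ 2).HasFiniteSupport :=
    hu.subset fun x hx => by contrapose! hx; simp_all
  have hshift : ∑ᶠ x, P (x - δ) = ∑ᶠ x, P x := finsum_comp_equiv (Equiv.subRight δ)
  calc _ = ∑ᶠ x, ((a (x - δ) - a x) * u x ^ 2 + (P x - P (x - δ))) :=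
        finsum_congr fun x => by simp only [P, sub_add_cancel]; ring
    _ = _ := by
      rw [finsum_add_distrib hQ (hP.fun_sub hPδ), finsum_sub_distrib hP hPδ, hshift, sub_self,
        add_zero]

theorem sum_mul_upwind {Ω : Finset G} {u : G → ℝ} (hu : ∀ x ∉ Ω, u x = 0) (δ : G) (a : G → ℝ) :
    ∑ x ∈ Ω, u x * (a (x - δ) * (u x - u (x - δ)) + a x * (u (x + δ) - u x))
      = ∑ x ∈ Ω, (a (x - δ) - a x) * u x ^ 2 := by
  have hΩ : ∀ {f : G → ℝ}, (∀ x, u x = 0 → f x = 0) → support f ⊆ Ω := fun hf x hx => by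
    contrapose! hx; exact notMem_support.mpr (hf x (hu x hx))
  rw [← finsum_eq_sum_of_support_subset _ (hΩ fun x hx => by simp [hx]),
    ← finsum_eq_sum_of_support_subset _ (hΩ fun x hx => by simp [hx])]
  exact finsum_mul_upwind δ a u (Ω.finite_toSet.subset (hΩ fun _ => id))

variable {ι : Type*} [Fintype ι]

noncomputable def advection (e : ι → G) (w : G → ι → ℝ) : (G → ℝ) →ₗ[ℝ] G → ℝ where
  toFun u x := ∑ j, (w (x - e j) j * (u x - u (x - e j)) + w x j * (u (x + e j) - u x))
  map_add' u v := by ext x; simp only [Pi.add_apply, ← sum_add_distrib]; congr! 1; ring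
  map_smul' c u := by
    ext x; simp only [Pi.smul_apply, smul_eq_mul, RingHom.id_apply, mul_sum]; congr! 1; ring

theorem advection_apply (e : ι → G) (w : G → ι → ℝ) (u : G → ℝ) (x : G) :
    advection e w u x
      = ∑ j, (w (x - e j) j * (u x - u (x - e j)) + w x j * (u (x + e j) - u x)) := rfl

def backwardDiv (e : ι → G) (w : G → ι → ℝ) (x : G) : ℝ := ∑ j, (w x j - w (x - e j) j)

theorem sum_mul_advection (e : ι → G) (w : G → ι → ℝ) {Ω : Finset G} {u : G → ℝ}
    (hu : ∀ x ∉ Ω, u x = 0) :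
    ∑ x ∈ Ω, u x * advection e w u x = -∑ x ∈ Ω, backwardDiv e w x * u x ^ 2 := by
  simp only [advection_apply, mul_sum]
  rw [sum_comm, sum_congr rfl fun j _ => sum_mul_upwind hu (e j) (fun y => w y j), sum_comm,
    ← sum_neg_distrib]
  refine sum_congr rfl fun x _ => ?_
  rw [backwardDiv, sum_mul, ← sum_neg_distrib]
  exact sum_congr rfl fun j _ => by ring

def IsImplicitStep (e : ι → G) (w : G → ι → ℝ) (c : ℝ) (Ω : Finset G) (v u : G → ℝ) : Prop :=
  (∀ x ∈ Ω, u x - v x + c * advection e w u x = 0) ∧ ∀ x ∉ Ω, u x = 0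

namespace IsImplicitStep

variable {e : ι → G} {w : G → ι → ℝ} {c : ℝ} {Ω : Finset G} {u u' v : G → ℝ}

theorem sum_sq_eq_sum_mul (hdiv : ∀ x ∈ Ω, backwardDiv e w x = 0)
    (hu : IsImplicitStep e w c Ω v u) : ∑ x ∈ Ω, u x ^ 2 = ∑ x ∈ Ω, u x * v x := by
  have hflux : ∑ x ∈ Ω, u x * advection e w u x = 0 := by
    rw [sum_mul_advection e w hu.2, neg_eq_zero]
    exact sum_eq_zero fun x hx => by rw [hdiv x hx, zero_mul]
  have htested : ∑ x ∈ Ω, u x * (u x - v x + c * advection e w u x) = 0 :=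
    sum_eq_zero fun x hx => by rw [hu.1 x hx, mul_zero]
  simp only [mul_add, mul_sub, sum_add_distrib, sum_sub_distrib, mul_left_comm (u _) c,
    ← mul_sum, hflux, mul_zero, add_zero, sub_eq_zero, ← sq] at htested
  exact htested

theorem sum_sq_le_sum_sq (hdiv : ∀ x ∈ Ω, backwardDiv e w x = 0)
    (hu : IsImplicitStep e w c Ω v u) {S : Finset G} (hΩS : Ω ⊆ S) :
    ∑ x ∈ S, u x ^ 2 ≤ ∑ x ∈ S, v x ^ 2 := by
  have hAMGM : 2 * ∑ x ∈ Ω, u x * v x ≤ ∑ x ∈ Ω, u x ^ 2 + ∑ x ∈ Ω, v x ^ 2 := by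
    rw [mul_sum, ← sum_add_distrib]
    exact sum_le_sum fun x _ => by rw [← mul_assoc]; exact two_mul_le_add_sq _ _
  calc ∑ x ∈ S, u x ^ 2 = ∑ x ∈ Ω, u x ^ 2 :=
        (sum_subset hΩS fun x _ hx => by rw [hu.2 x hx, sq, zero_mul]).symm
    _ ≤ ∑ x ∈ Ω, v x ^ 2 := by linarith [hu.sum_sq_eq_sum_mul hdiv]
    _ ≤ ∑ x ∈ S, v x ^ 2 := sum_le_sum_of_subset_of_nonneg hΩS fun x _ _ => sq_nonneg _

theorem eq_zero (hdiv : ∀ x ∈ Ω, backwardDiv e w x = 0)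
    (hu : IsImplicitStep e w c Ω 0 u) : u = 0 := by
  have hsq : ∑ x ∈ Ω, u x ^ 2 = 0 := by simpa using hu.sum_sq_eq_sum_mul hdiv
  funext x
  by_cases hx : x ∈ Ω
  · exact pow_eq_zero_iff two_ne_zero |>.mp <|
      (sum_eq_zero_iff_of_nonneg fun x _ => sq_nonneg (u x)).mp hsq x hx
  · exact hu.2 x hx

theorem sub (hu : IsImplicitStep e w c Ω v u) (hu' : IsImplicitStep e w c Ω v u') :
    IsImplicitStep e w c Ω 0 (u - u') := by
  refine ⟨fun x hx => ?_, fun x hx => by simp [hu.2 x hx, hu'.2 x hx]⟩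
  have h := congr_arg₂ (· - ·) (hu.1 x hx) (hu'.1 x hx)
  simp only [map_sub, Pi.sub_apply, Pi.zero_apply] at h ⊢
  linear_combination h

end IsImplicitStep

theorem existsUnique_isImplicitStep {e : ι → G} {w : G → ι → ℝ} {Ω : Finset G}
    (hdiv : ∀ x ∈ Ω, backwardDiv e w x = 0) (c : ℝ) (v : G → ℝ) :
    ∃! u, IsImplicitStep e w c Ω v u := by
  let extend : (Ω → ℝ) →ₗ[ℝ] G → ℝ := ExtendByZero.linearMap ℝ Subtype.val
  have hextend_mem (u : Ω → ℝ) (x : Ω) : extend u x = u x :=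
    Subtype.val_injective.extend_apply u 0 x
  have hextend_not_mem (u : Ω → ℝ) {x : G} (hx : x ∉ Ω) : extend u x = 0 :=
    extend_apply' _ _ _ fun ⟨y, hy⟩ => hx (hy ▸ y.2)
  let L : (Ω → ℝ) →ₗ[ℝ] Ω → ℝ :=
    LinearMap.funLeft ℝ ℝ Subtype.val ∘ₗ (LinearMap.id + c • advection e w) ∘ₗ extend
  have hL (u : Ω → ℝ) (v : G → ℝ) (huv : L u = fun x : Ω => v x) :
      IsImplicitStep e w c Ω v (extend u) := by
    refine ⟨fun x hx => ?_, fun x hx => hextend_not_mem u hx⟩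
    have h := congrFun huv ⟨x, hx⟩
    simp only [L, LinearMap.coe_comp, comp_apply, LinearMap.funLeft_apply, LinearMap.add_apply,
      LinearMap.id_apply, LinearMap.smul_apply, Pi.add_apply, Pi.smul_apply, smul_eq_mul] at h
    linarith
  have hinj : Injective L := by
    rw [← LinearMap.ker_eq_bot, LinearMap.ker_eq_bot']
    intro u hu
    funext x
    simpa [hextend_mem] using congrFun ((hL u 0 hu).eq_zero hdiv) x
  obtain ⟨u, hu⟩ := LinearMap.injective_iff_surjective.mp hinj fun x : Ω => v x
  exact ⟨extend u, hL u v hu, fun u' hu' => sub_eq_zero.mp ((hu'.sub (hL u v hu)).eq_zero hdiv)⟩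

theorem implicitResidual_eq {h τ : ℝ} (hh : h ≠ 0) (hτ : τ ≠ 0) (e : ι → G) (w : G → ι → ℝ)
    (u v : G → ℝ) (x : G) :
    (u x - v x) / τ + (1 / 2) * ∑ j, (w (x - e j) j * ((u x - u (x - e j)) / h)
        + w x j * ((u (x + e j) - u x) / h))
      = (u x - v x + τ / (2 * h) * advection e w u x) / τ := by
  have hsum : ∑ j, (w (x - e j) j * ((u x - u (x - e j)) / h) + w x j * ((u (x + e j) - u x) / h))
      = advection e w u x / h := by
    rw [advection_apply, sum_div]
    exact sum_congr rfl fun j _ => by ring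
  rw [hsum]
  field_simp

end Advection

theorem existsUnique_seq_of_existsUnique_step {α : Type*} {R : ℕ → α → α → Prop}
    (hR : ∀ n a, ∃! b, R n a b) (a₀ : α) :
    ∃! f : ℕ → α, f 0 = a₀ ∧ ∀ n, R n (f n) (f (n + 1)) := by
  choose next hnext hunique using hR
  refine ⟨fun n => Nat.rec a₀ next n, ⟨rfl, fun n => hnext n _⟩, fun f ⟨hf0, hf⟩ => ?_⟩
  funext n
  induction n with
  | zero => exact hf0
  | succ n ih => exact (hunique n _ _ (hf n)).trans (congrArg (next n) ih)

theorem solvesImplicitScheme_iff {h τ : ℝ} (hh : h ≠ 0) (hτ : τ ≠ 0) (Ωh : Finset (Fin 3 → ℤ))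
    (w : ℕ → (Fin 3 → ℤ) → Fin 3 → ℝ) (g0 : (Fin 3 → ℤ) → ℝ) (g : ℕ → (Fin 3 → ℤ) → ℝ) :
    SolvesImplicitScheme h τ Ωh w g0 g ↔ g 0 = g0 ∧ ∀ n,
      IsImplicitStep (fun j => Pi.single j 1) (w n) (τ / (2 * h)) (Ωh \ discreteBoundary Ωh)
        (g n) (g (n + 1)) := by
  refine and_congr_right fun _ => forall_congr' fun n => and_congr_left fun _ =>
    forall₂_congr fun x _ => ?_
  rw [implicitResidual_eq hh hτ (fun j => Pi.single j 1), div_eq_zero_iff, or_iff_left hτ]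

theorem implicit_scheme_solvable_and_L2_stable_general
    (h τ : ℝ) (hh : 0 < h) (hτ : 0 < τ)
    (Ωh : Finset (Fin 3 → ℤ))
    (w : ℕ → (Fin 3 → ℤ) → Fin 3 → ℝ)
    (hwdiv : ∀ n, ∀ x ∈ Ωh \ discreteBoundary Ωh,
      ∑ j : Fin 3, (w n x j - w n (x - Pi.single j 1) j) / h = 0)
    (g0 : (Fin 3 → ℤ) → ℝ) :
    (∃! g : ℕ → (Fin 3 → ℤ) → ℝ, SolvesImplicitScheme h τ Ωh w g0 g) ∧
    (∀ g : ℕ → (Fin 3 → ℤ) → ℝ, SolvesImplicitScheme h τ Ωh w g0 g →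
      ∀ n : ℕ, ∑ x ∈ Ωh, (g n x) ^ 2 * h ^ 3 ≤ ∑ x ∈ Ωh, (g0 x) ^ 2 * h ^ 3) := by
  have hdiv : ∀ n, ∀ x ∈ Ωh \ discreteBoundary Ωh,
      backwardDiv (fun j : Fin 3 => Pi.single j 1) (w n) x = 0 := fun n x hx => by
    simpa [backwardDiv, ← sum_div, hh.ne'] using hwdiv n x hx
  simp only [solvesImplicitScheme_iff hh.ne' hτ.ne']
  refine ⟨existsUnique_seq_of_existsUnique_step
    (fun n => existsUnique_isImplicitStep (hdiv n) _) g0, fun g ⟨hg0, hg⟩ n => ?_⟩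
  have hanti : Antitone fun n => ∑ x ∈ Ωh, g n x ^ 2 :=
    antitone_nat_of_succ_le fun n => (hg n).sum_sq_le_sum_sq (hdiv n) sdiff_subset
  rw [← sum_mul, ← sum_mul, ← hg0]
  exact mul_le_mul_of_nonneg_right (hanti n.zero_le) (by positivity)

/-- The implicit scheme with discrete divergence-free velocity is uniquely solvable for
every `h, τ > 0` (no scaling condition), and the solution satisfies the discrete `L²`
bound `‖gⁿ‖_{2,Ω_h} ≤ ‖g⁰‖_{2,Ω_h}` for all `n`. -/
theorem implicit_scheme_solvable_and_L2_stable
    (h τ : ℝ) (hh : 0 < h) (hτ : 0 < τ)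
    (Ωh : Finset (Fin 3 → ℤ))
    (w : ℕ → (Fin 3 → ℤ) → Fin 3 → ℝ)
    (hwdiv : ∀ n, ∀ x ∈ Ωh \ discreteBoundary Ωh,
      ∑ j : Fin 3, (w n x j - w n (x - Pi.single j 1) j) / h = 0)
    (hw0 : ∀ n x, x ∉ Ωh \ discreteBoundary Ωh → ∀ j : Fin 3, w n x j = 0)
    (g0 : (Fin 3 → ℤ) → ℝ)
    (hg00 : ∀ x, x ∉ Ωh \ discreteBoundary Ωh → g0 x = 0) :
    (∃! g : ℕ → (Fin 3 → ℤ) → ℝ, SolvesImplicitScheme h τ Ωh w g0 g) ∧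
    (∀ g : ℕ → (Fin 3 → ℤ) → ℝ, SolvesImplicitScheme h τ Ωh w g0 g →
      ∀ n : ℕ, ∑ x ∈ Ωh, (g n x) ^ 2 * h ^ 3 ≤ ∑ x ∈ Ωh, (g0 x) ^ 2 * h ^ 3) :=
  implicit_scheme_solvable_and_L2_stable_general h τ hh hτ Ωh w hwdiv g0
end
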